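/- In the two-qubit system with agents Alice and Bob, commands {R_x(θ), CNOT}, initial state |00⟩⟨00|, where Alice's R_x(θ) applies R_x(θ) ⊗ I, Bob's R_x(θ) applies I ⊗ R_x(θ), both agents' CNOT applies the controlled-NOT with the first qubit as control and the second as target, Alice's POVM set contains only the computational-basis measurement on the first qubit, and Bob's contains only the computational-basis measurement on the second qubit: Bob with the command R_x(θ) does not interfere with Alice, i.e. Int({Bob}, {R_x(θ)} | {Alice}) = 0; equivalently, for every finite action sequence α, d_Alice(𝓔_α(ρ0), 𝓔_{purge_{{Bob},{R_x(θ)}}(α)}(ρ0)) = 0. -/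

import Mathlib

/-!
Bob's rotation is conjugation by `U = 1 ⊗ R_x(θ)`. This unitary commutes with every gate of the
system (with `R_x(θ) ⊗ 1` trivially, with CNOT because `R_x(θ)` commutes with the Pauli `X`) and
with Alice's projections `|i⟩⟨i| ⊗ 1`. Hence every deleted Bob rotation can be pushed to the end of
the run, where it does not change Alice's outcome probabilities `tr((|i⟩⟨i| ⊗ 1) ρ)`.
-/

open scoped Classical ComplexOrder
open Matrix Kronecker

noncomputable section

/-- A density operator: positive semidefinite with trace 1. -/
def IsDensity {d : Type} [Fintype d] [DecidableEq d] (ρ : Matrix d d ℂ) : Prop :=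
  ρ.PosSemidef ∧ ρ.trace = 1

/-- A super-operator: a linear, positive, trace-preserving map on matrices. -/
def IsSuperOp {d : Type} [Fintype d] [DecidableEq d]
    (F : Matrix d d ℂ → Matrix d d ℂ) : Prop :=
  IsLinearMap ℂ F ∧ (∀ ρ : Matrix d d ℂ, ρ.PosSemidef → (F ρ).PosSemidef) ∧
    (∀ ρ : Matrix d d ℂ, (F ρ).trace = ρ.trace)

/-- A finite family of matrices (the data of a measurement). -/
structure PMeas (d : Type) where
  m : ℕ
  E : Fin m → Matrix d d ℂ

/-- The family is a POVM: positive semidefinite elements summing to the identity. -/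
def PMeas.IsPOVM {d : Type} [Fintype d] [DecidableEq d] (P : PMeas d) : Prop :=
  (∀ i, (P.E i).PosSemidef) ∧ ∑ i, P.E i = 1

/-- The distance between outcome distributions of a measurement on two states. -/
def dE {d : Type} [Fintype d] (P : PMeas d) (ρ σ : Matrix d d ℂ) : ℝ :=
  (1 / 2) * ∑ i, ‖(P.E i * ρ).trace - (P.E i * σ).trace‖

/-- The measurement pseudo-distance induced by a set of measurements. -/
def dM {d : Type} [Fintype d] (M : Set (PMeas d)) (ρ σ : Matrix d d ℂ) : ℝ :=
  sSup { x | ∃ P ∈ M, x = dE P ρ σ }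

/-- A quantum system: initial state, agents, commands, super-operators, measurements. -/
structure QSystem (Agent Cmd d : Type) where
  ρ0 : Matrix d d ℂ
  A : Set Agent
  C : Set Cmd
  Ecmd : Agent → Cmd → Matrix d d ℂ → Matrix d d ℂ
  M : Agent → Set (PMeas d)

/-- Well-formedness: the initial state is a density operator, commands act as
super-operators, and agents measure with POVMs. -/
def QSystem.WellFormed {Agent Cmd d : Type} [Fintype d] [DecidableEq d]
    (S : QSystem Agent Cmd d) : Prop :=
  IsDensity S.ρ0 ∧ (∀ a ∈ S.A, ∀ c ∈ S.C, IsSuperOp (S.Ecmd a c)) ∧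
    (∀ a ∈ S.A, ∀ P ∈ S.M a, P.IsPOVM)

/-- Execution of a finite action sequence (composition of super-operators, in order). -/
def QSystem.run {Agent Cmd d : Type} (S : QSystem Agent Cmd d)
    (α : List (Agent × Cmd)) (ρ : Matrix d d ℂ) : Matrix d d ℂ :=
  α.foldl (fun τ p => S.Ecmd p.1 p.2 τ) ρ

/-- A sequence over A × C. -/
def QSystem.Valid {Agent Cmd d : Type} (S : QSystem Agent Cmd d)
    (α : List (Agent × Cmd)) : Prop :=
  ∀ p ∈ α, p.1 ∈ S.A ∧ p.2 ∈ S.C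

/-- `purge G D α` deletes from `α` every pair `(a, c)` with `a ∈ G` and `c ∈ D`. -/
def purge {Agent Cmd : Type} (G : Set Agent) (D : Set Cmd) :
    List (Agent × Cmd) → List (Agent × Cmd)
  | [] => []
  | p :: rest => if p.1 ∈ G ∧ p.2 ∈ D then purge G D rest else p :: purge G D rest

/-- A reachable density operator. -/
def QSystem.Reachable {Agent Cmd d : Type} (S : QSystem Agent Cmd d)
    (ρ : Matrix d d ℂ) : Prop :=
  ∃ α, S.Valid α ∧ S.run α S.ρ0 = ρ

/-- `∇ a`: the set of agents from which information may not flow to `a`. -/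
def nabla {Agent : Type} (pol : Agent → Agent → Prop) (a : Agent) : Set Agent :=
  { b | ¬ pol b a }

/-- The security degree `K(𝕊,↝)`. -/
def Kdeg {Agent Cmd d : Type} [Fintype d] (S : QSystem Agent Cmd d)
    (pol : Agent → Agent → Prop) : ℝ :=
  sSup { x | ∃ a ∈ S.A, ∃ α, S.Valid α ∧
    x = dM (S.M a) (S.run α S.ρ0) (S.run (purge (nabla pol a) Set.univ α) S.ρ0) }

/-- The `t`-bounded security degree `K_t(𝕊,↝)`. -/
def Kt {Agent Cmd d : Type} [Fintype d] (S : QSystem Agent Cmd d)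
    (pol : Agent → Agent → Prop) (t : ℕ) : ℝ :=
  sSup { x | ∃ a ∈ S.A, ∃ α, S.Valid α ∧ α.length ≤ t ∧
    x = dM (S.M a) (S.run α S.ρ0) (S.run (purge (nabla pol a) Set.univ α) S.ρ0) }

/-- The interference degree `Int(G₁, D | G₂)`. -/
def IntDeg {Agent Cmd d : Type} [Fintype d] (S : QSystem Agent Cmd d)
    (G1 : Set Agent) (D : Set Cmd) (G2 : Set Agent) : ℝ :=
  sSup { x | ∃ a ∈ G2, ∃ α, S.Valid α ∧
    x = dM (S.M a) (S.run α S.ρ0) (S.run (purge G1 D α) S.ρ0) }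

/-- Trace distance `d(ρ,σ) = (1/2)·tr √((ρ−σ)†(ρ−σ))`. -/
def traceDist {d : Type} [Fintype d] [DecidableEq d] (ρ σ : Matrix d d ℂ) : ℝ :=
  (1 / 2) * (((Matrix.posSemidef_conjTranspose_mul_self (ρ - σ)).1.eigenvectorUnitary.1 *
    Matrix.diagonal (((↑) : ℝ → ℂ) ∘ (Real.sqrt ·) ∘
      (Matrix.posSemidef_conjTranspose_mul_self (ρ - σ)).1.eigenvalues) *
    (star (Matrix.posSemidef_conjTranspose_mul_self (ρ - σ)).1.eigenvectorUnitary :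
      Matrix d d ℂ)).trace).re

end
noncomputable section

/-- The two agents Alice and Bob. -/
inductive Ag : Type
  | alice : Ag
  | bob : Ag
deriving DecidableEq

/-- The two commands: the rotation `R_x(θ)` and the controlled-NOT. -/
inductive Cm : Type
  | rx : Cm
  | cnot : Cm
deriving DecidableEq

/-- The rotation about the x-axis of the Bloch sphere. -/
def Rx (θ : ℝ) : Matrix (Fin 2) (Fin 2) ℂ :=
  !![(Real.cos (θ / 2) : ℂ), -Complex.I * (Real.sin (θ / 2) : ℂ);
     -Complex.I * (Real.sin (θ / 2) : ℂ), (Real.cos (θ / 2) : ℂ)]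

/-- The controlled-NOT gate with the first qubit as control: `|i,k⟩ ↦ |i, k + i⟩`. -/
def CNOT : Matrix (Fin 2 × Fin 2) (Fin 2 × Fin 2) ℂ :=
  Matrix.of fun p q => if p.1 = q.1 ∧ p.2 = q.2 + q.1 then 1 else 0

/-- The super-operator `ρ ↦ U ρ U†` of a unitary `U`. -/
def conjOp {d : Type} [Fintype d] (U : Matrix d d ℂ) :
    Matrix d d ℂ → Matrix d d ℂ :=
  fun ρ => U * ρ * Uᴴ

/-- The projection `|i⟩⟨i|` on one qubit. -/
def proj (i : Fin 2) : Matrix (Fin 2) (Fin 2) ℂ := Matrix.single i i 1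

/-- The computational-basis measurement on the first qubit. -/
def measFst : PMeas (Fin 2 × Fin 2) where
  m := 2
  E := fun i => proj i ⊗ₖ (1 : Matrix (Fin 2) (Fin 2) ℂ)

/-- The computational-basis measurement on the second qubit. -/
def measSnd : PMeas (Fin 2 × Fin 2) where
  m := 2
  E := fun i => (1 : Matrix (Fin 2) (Fin 2) ℂ) ⊗ₖ proj i

/-- The basis vector `|00⟩` of the two-qubit space. -/
def ket00 : (Fin 2 × Fin 2) → ℂ := fun p => if p = (0, 0) then 1 else 0

/-- The two-qubit system of Example 3.1: initial state `|00⟩⟨00|`; Alice's `R_x(θ)`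
acts on the first qubit, Bob's on the second; both agents' CNOT has the first qubit as
control and the second as target; Alice measures the first qubit in the computational
basis, Bob the second. -/
def twoQubitSys (θ : ℝ) : QSystem Ag Cm (Fin 2 × Fin 2) where
  ρ0 := Matrix.vecMulVec ket00 (star ket00)
  A := Set.univ
  C := Set.univ
  Ecmd := fun a c =>
    match a, c with
    | Ag.alice, Cm.rx => conjOp (Rx θ ⊗ₖ (1 : Matrix (Fin 2) (Fin 2) ℂ))
    | Ag.bob, Cm.rx => conjOp ((1 : Matrix (Fin 2) (Fin 2) ℂ) ⊗ₖ Rx θ)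
    | _, Cm.cnot => conjOp CNOT
  M := fun a =>
    match a with
    | Ag.alice => {measFst}
    | Ag.bob => {measSnd}

end

namespace QSystem

variable {Agent Cmd d : Type} (S : QSystem Agent Cmd d)

theorem run_cons (p : Agent × Cmd) (α : List (Agent × Cmd)) (ρ : Matrix d d ℂ) :
    S.run (p :: α) ρ = S.run α (S.Ecmd p.1 p.2 ρ) :=
  rfl

theorem run_comm {F : Matrix d d ℂ → Matrix d d ℂ}
    (hF : ∀ a c σ, S.Ecmd a c (F σ) = F (S.Ecmd a c σ)) (α : List (Agent × Cmd))
    (σ : Matrix d d ℂ) : S.run α (F σ) = F (S.run α σ) := by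
  induction α generalizing σ with
  | nil => rfl
  | cons p α ih => rw [run_cons, run_cons, hF, ih]

theorem apply_run_purge {β : Type} {G : Set Agent} {D : Set Cmd}
    {F : Matrix d d ℂ → Matrix d d ℂ} {f : Matrix d d ℂ → β}
    (hGD : ∀ a ∈ G, ∀ c ∈ D, S.Ecmd a c = F)
    (hF : ∀ a c σ, S.Ecmd a c (F σ) = F (S.Ecmd a c σ)) (hf : ∀ σ, f (F σ) = f σ)
    (α : List (Agent × Cmd)) (σ : Matrix d d ℂ) :
    f (S.run (purge G D α) σ) = f (S.run α σ) := by
  induction α generalizing σ with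
  | nil => rfl
  | cons p α ih =>
    by_cases hp : p.1 ∈ G ∧ p.2 ∈ D
    · rw [purge, if_pos hp, run_cons, hGD _ hp.1 _ hp.2, S.run_comm hF, hf, ih]
    · rw [purge, if_neg hp, run_cons, run_cons, ih]

end QSystem

theorem dE_eq_zero_of_trace_eq {d : Type} [Fintype d] (P : PMeas d) {ρ σ : Matrix d d ℂ}
    (h : ∀ i, (P.E i * ρ).trace = (P.E i * σ).trace) : dE P ρ σ = 0 := by
  simp [dE, h]

theorem dM_singleton {d : Type} [Fintype d] (P : PMeas d) (ρ σ : Matrix d d ℂ) :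
    dM {P} ρ σ = dE P ρ σ := by
  simp [dM]

theorem IntDeg_eq_zero {Agent Cmd d : Type} [Fintype d] (S : QSystem Agent Cmd d)
    {G1 : Set Agent} {D : Set Cmd} {G2 : Set Agent} (hG2 : G2.Nonempty)
    (h : ∀ a ∈ G2, ∀ α, dM (S.M a) (S.run α S.ρ0) (S.run (purge G1 D α) S.ρ0) = 0) :
    IntDeg S G1 D G2 = 0 := by
  obtain ⟨a, ha⟩ := hG2
  have hset : { x | ∃ a ∈ G2, ∃ α, S.Valid α ∧
      x = dM (S.M a) (S.run α S.ρ0) (S.run (purge G1 D α) S.ρ0) } = {0} := by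
    ext x
    constructor
    · rintro ⟨b, hb, α, -, rfl⟩
      exact h b hb α
    · rintro rfl
      exact ⟨a, ha, [], fun p hp => absurd hp List.not_mem_nil, (h a ha []).symm⟩
  rw [IntDeg, hset, csSup_singleton]

theorem conjOp_conjOp_of_commute {d : Type} [Fintype d] {U V : Matrix d d ℂ} (h : Commute V U)
    (σ : Matrix d d ℂ) : conjOp V (conjOp U σ) = conjOp U (conjOp V σ) := by
  have h' : Commute Uᴴ Vᴴ := by
    simpa only [Commute, SemiconjBy, ← conjTranspose_mul] using congrArg conjTranspose h.eq
  simp only [conjOp]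
  calc V * (U * σ * Uᴴ) * Vᴴ = V * U * σ * (Uᴴ * Vᴴ) := by simp only [Matrix.mul_assoc]
    _ = U * V * σ * (Vᴴ * Uᴴ) := by rw [h.eq, h'.eq]
    _ = U * (V * σ * Vᴴ) * Uᴴ := by simp only [Matrix.mul_assoc]

theorem trace_mul_conjOp_of_commute {d : Type} [Fintype d] [DecidableEq d] {U P : Matrix d d ℂ}
    (hU : U ∈ unitary (Matrix d d ℂ)) (hP : Commute P U) (τ : Matrix d d ℂ) :
    (P * conjOp U τ).trace = (P * τ).trace := by
  have hUU : Uᴴ * U = 1 := Unitary.star_mul_self_of_mem hU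
  calc (P * conjOp U τ).trace = (U * (P * τ * Uᴴ)).trace := by
        simp only [conjOp, ← Matrix.mul_assoc, hP.eq]
    _ = (P * τ).trace := by rw [trace_mul_comm, Matrix.mul_assoc, hUU, Matrix.mul_one]

theorem commute_kronecker_one_one_kronecker {m n : Type} [Fintype m] [DecidableEq m]
    [Fintype n] [DecidableEq n] (A : Matrix m m ℂ) (B : Matrix n n ℂ) :
    Commute (A ⊗ₖ (1 : Matrix n n ℂ)) ((1 : Matrix m m ℂ) ⊗ₖ B) := by
  simp [Commute, SemiconjBy, ← mul_kronecker_mul]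

theorem Rx_mem_unitary (θ : ℝ) : Rx θ ∈ unitary (Matrix (Fin 2) (Fin 2) ℂ) := by
  rw [← unitaryGroup, mem_unitaryGroup_iff', star_eq_conjTranspose]
  ext i j
  fin_cases i <;> fin_cases j <;>
    simp [Rx, mul_apply, Fin.sum_univ_two, Complex.ext_iff,
      -Complex.ofReal_cos, -Complex.ofReal_sin] <;>
    nlinarith [Real.sin_sq_add_cos_sq (θ / 2)]

theorem commute_CNOT_one_kronecker_Rx (θ : ℝ) :
    Commute CNOT ((1 : Matrix (Fin 2) (Fin 2) ℂ) ⊗ₖ Rx θ) := by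
  unfold Commute SemiconjBy
  ext ⟨i, k⟩ ⟨j, l⟩
  simp only [mul_apply, Fintype.sum_prod_type, Fin.sum_univ_two]
  fin_cases i <;> fin_cases k <;> fin_cases j <;> fin_cases l <;>
    simp [CNOT, Rx, one_apply]

theorem twoQubitSys_Ecmd_conjOp_bob_rx (θ : ℝ) (a : Ag) (c : Cm)
    (σ : Matrix (Fin 2 × Fin 2) (Fin 2 × Fin 2) ℂ) :
    (twoQubitSys θ).Ecmd a c (conjOp (1 ⊗ₖ Rx θ) σ) =
      conjOp (1 ⊗ₖ Rx θ) ((twoQubitSys θ).Ecmd a c σ) := by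
  cases a <;> cases c
  · exact conjOp_conjOp_of_commute (commute_kronecker_one_one_kronecker _ _) σ
  · exact conjOp_conjOp_of_commute (commute_CNOT_one_kronecker_Rx θ) σ
  · exact conjOp_conjOp_of_commute (Commute.refl _) σ
  · exact conjOp_conjOp_of_commute (commute_CNOT_one_kronecker_Rx θ) σ

/-- **Claim 1 of Example 3.1.** In the two-qubit system, Bob with the command `R_x(θ)`
does not interfere with Alice: `Int({Bob}, {R_x(θ)} | {Alice}) = 0`; equivalently, for
every finite action sequence `α`,
`d_Alice(𝓔_α(ρ0), 𝓔_{purge_{{Bob},{R_x(θ)}}(α)}(ρ0)) = 0`. -/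
theorem bob_rx_noninterference_with_alice (θ : ℝ) :
    IntDeg (twoQubitSys θ) {Ag.bob} {Cm.rx} {Ag.alice} = 0 ∧
    ∀ α : List (Ag × Cm),
      dM ((twoQubitSys θ).M Ag.alice)
        ((twoQubitSys θ).run α (twoQubitSys θ).ρ0)
        ((twoQubitSys θ).run (purge {Ag.bob} {Cm.rx} α) (twoQubitSys θ).ρ0) = 0 := by
  have hU : (1 : Matrix (Fin 2) (Fin 2) ℂ) ⊗ₖ Rx θ ∈ unitary _ :=
    kronecker_mem_unitary (one_mem _) (Rx_mem_unitary θ)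
  have hAlice : ∀ α : List (Ag × Cm),
      dM ((twoQubitSys θ).M Ag.alice)
        ((twoQubitSys θ).run α (twoQubitSys θ).ρ0)
        ((twoQubitSys θ).run (purge {Ag.bob} {Cm.rx} α) (twoQubitSys θ).ρ0) = 0 := by
    intro α
    refine (dM_singleton measFst _ _).trans (dE_eq_zero_of_trace_eq _ fun i => ?_)
    refine ((twoQubitSys θ).apply_run_purge (f := fun ρ => (measFst.E i * ρ).trace)
      ?_ (twoQubitSys_Ecmd_conjOp_bob_rx θ) ?_ α _).symm
    · rintro a rfl c rfl
      rfl
    · exact trace_mul_conjOp_of_commute hU (commute_kronecker_one_one_kronecker _ _)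
  exact ⟨IntDeg_eq_zero _ (Set.singleton_nonempty _) (by rintro a rfl; exact hAlice), hAlice⟩
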